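/- arXiv:1508.04214 — 5 statements merged into one kernel-verified Lean document; each statement's English description precedes it below -/
import Mathlib

section
/- Let A be an n×n Hermitian matrix with eigenvalues λ₁ ≥ λ₂ ≥ ... ≥ λ_n and orthonormal eigenvectors s₁, ..., s_n. Let V be an n×m matrix with orthonormal columns (m ≥ J) whose column span contains s₁, ..., s_J. Then λ_J(V* A V) = λ_J(A). -/
/-
Write `C = Vᴴ A V`. As `V` is an isometry, the Rayleigh quotient of `C` at `z` is that of `A` at
`V z`. By the max–min half of Courant–Fischer, `r ≤ λ_J(M)` as soon as the Rayleigh quotient of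
`M` is at least `r` on some `(J+1)`-dimensional subspace. Transporting the span of the top `J+1`
eigenvectors of `C` through `V` gives `λ_J(C) ≤ λ_J(A)` (half of Cauchy interlacing). Conversely,
`Vᴴ s₀, …, Vᴴ s_J` are orthonormal eigenvectors of `C` with eigenvalues
`λ₀(A) ≥ ⋯ ≥ λ_J(A)`, since `V Vᴴ` fixes the `sᵢ`; their span gives `λ_J(A) ≤ λ_J(C)`.
-/

open Matrix

/-- The `J`-th largest eigenvalue (0-indexed, counting multiplicity) of a Hermitian matrix. -/
noncomputable def eigLarge {n : ℕ} {A : Matrix (Fin n) (Fin n) ℂ} (hA : A.IsHermitian)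
    (J : Fin n) : ℝ :=
  (hA.eigenvalues ∘ Tuple.sort hA.eigenvalues) J.rev

/-- The spectral (operator 2-) norm of a square complex matrix. -/
noncomputable def specNorm {n : ℕ} (A : Matrix (Fin n) (Fin n) ℂ) : ℝ :=
  ‖Matrix.toEuclideanCLM (𝕜 := ℂ) A‖

/-- The `J`-th largest singular value (0-indexed) of a rectangular complex matrix. -/
noncomputable def svalLarge {p q : ℕ} (B : Matrix (Fin p) (Fin q) ℂ) (J : Fin q) : ℝ :=
  Real.sqrt (eigLarge (Matrix.isHermitian_conjTranspose_mul_self B) J)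

open Module Submodule RCLike
open scoped InnerProductSpace ComplexConjugate

namespace Orthonormal

variable {𝕜 E ι : Type*} [RCLike 𝕜] [NormedAddCommGroup E] [InnerProductSpace 𝕜 E] [Fintype ι]
  {v : ι → E} {T : E →ₗ[𝕜] E} {μ : ι → ℝ}

theorem re_inner_map_sum_smul (hv : Orthonormal 𝕜 v) (hTv : ∀ i, T (v i) = (μ i : 𝕜) • v i)
    (c : ι → 𝕜) :
    re ⟪T (∑ i, c i • v i), ∑ i, c i • v i⟫_𝕜 = ∑ i, μ i * ‖c i‖ ^ 2 := by
  have hT : T (∑ i, c i • v i) = ∑ i, (μ i * c i) • v i := by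
    simp only [map_sum, map_smul, hTv, smul_smul, mul_comm]
  have hterm (i : ι) : conj ((μ i : 𝕜) * c i) * c i = ((μ i * ‖c i‖ ^ 2 : ℝ) : 𝕜) := by
    rw [map_mul, conj_ofReal, mul_assoc, RCLike.conj_mul]; push_cast; ring
  simp_rw [hT, hv.inner_sum, hterm, ← ofReal_sum, ofReal_re]

theorem norm_sum_smul_sq (hv : Orthonormal 𝕜 v) (c : ι → 𝕜) :
    ‖∑ i, c i • v i‖ ^ 2 = ∑ i, ‖c i‖ ^ 2 := by
  simpa using hv.re_inner_map_sum_smul (T := LinearMap.id) (μ := 1) (by simp) c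

theorem mul_norm_sq_le_re_inner_map (hv : Orthonormal 𝕜 v)
    (hTv : ∀ i, T (v i) = (μ i : 𝕜) • v i) {r : ℝ} (hr : ∀ i, r ≤ μ i) {x : E}
    (hx : x ∈ span 𝕜 (Set.range v)) : r * ‖x‖ ^ 2 ≤ re ⟪T x, x⟫_𝕜 := by
  obtain ⟨c, rfl⟩ := mem_span_range_iff_exists_fun 𝕜 |>.mp hx
  rw [hv.re_inner_map_sum_smul hTv, hv.norm_sum_smul_sq, Finset.mul_sum]
  gcongr with i
  exact hr i

theorem re_inner_map_le_mul_norm_sq (hv : Orthonormal 𝕜 v)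
    (hTv : ∀ i, T (v i) = (μ i : 𝕜) • v i) {r : ℝ} (hr : ∀ i, μ i ≤ r) {x : E}
    (hx : x ∈ span 𝕜 (Set.range v)) : re ⟪T x, x⟫_𝕜 ≤ r * ‖x‖ ^ 2 := by
  obtain ⟨c, rfl⟩ := mem_span_range_iff_exists_fun 𝕜 |>.mp hx
  rw [hv.re_inner_map_sum_smul hTv, hv.norm_sum_smul_sq, Finset.mul_sum]
  gcongr with i
  exact hr i

end Orthonormal

/-- One half of the Courant–Fischer min-max principle. -/
theorem LinearMap.IsSymmetric.le_eigenvalues_of_forall_mem {𝕜 E : Type*} [RCLike 𝕜]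
    [NormedAddCommGroup E] [InnerProductSpace 𝕜 E] [FiniteDimensional 𝕜 E] {T : E →ₗ[𝕜] E}
    (hT : T.IsSymmetric) {n : ℕ} (hn : finrank 𝕜 E = n) {S : Submodule 𝕜 E} {i : Fin n}
    (hS : (i : ℕ) < finrank 𝕜 S) {r : ℝ} (hr : ∀ x ∈ S, r * ‖x‖ ^ 2 ≤ re ⟪T x, x⟫_𝕜) :
    r ≤ hT.eigenvalues hn i := by
  set u : {j : Fin n // i ≤ j} → E := fun j => hT.eigenvectorBasis hn j
  have hu : Orthonormal 𝕜 u := (hT.eigenvectorBasis hn).orthonormal.comp _ Subtype.val_injective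
  set B := span 𝕜 (Set.range u)
  have hB : finrank 𝕜 B = n - i := by
    rw [finrank_span_eq_card hu.linearIndependent, Fintype.card_subtype, ← Fin.card_Ici]
    congr 1; ext; simp
  -- `S` and `B` have dimensions summing to more than `n`, so they meet.
  have hSB : S ⊓ B ≠ ⊥ := by
    rw [← Submodule.one_le_finrank_iff]
    have := Submodule.finrank_sup_add_finrank_inf_eq S B
    have := (S ⊔ B).finrank_le
    omega
  obtain ⟨x, ⟨hxS, hxB⟩, hx0⟩ := Submodule.exists_mem_ne_zero_of_ne_bot hSB
  have hupper : re ⟪T x, x⟫_𝕜 ≤ hT.eigenvalues hn i * ‖x‖ ^ 2 :=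
    hu.re_inner_map_le_mul_norm_sq (fun j => hT.apply_eigenvectorBasis hn j)
      (fun j => hT.eigenvalues_antitone hn j.2) hxB
  exact le_of_mul_le_mul_right ((hr x hxS).trans hupper) (by positivity)

namespace Matrix.IsHermitian

variable {p : ℕ} {M : Matrix (Fin p) (Fin p) ℂ}

theorem eigLarge_eq_eigenvalues₀ (hM : M.IsHermitian) (k : Fin p) :
    eigLarge hM k = hM.eigenvalues₀ (Fin.cast (Fintype.card_fin p).symm k) := by
  set τ : Equiv.Perm (Fin p) :=
    (Fin.revPerm.trans (finCongr (Fintype.card_fin p).symm)).trans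
      (Fintype.equivOfCardEq (Fintype.card_fin _))
  have hτ : hM.eigenvalues ∘ τ
      = hM.eigenvalues₀ ∘ Fin.cast (Fintype.card_fin p).symm ∘ Fin.rev := by
    ext k; simp [τ, Matrix.IsHermitian.eigenvalues]
  have hmono : Monotone (hM.eigenvalues ∘ τ) := by
    rw [hτ]
    exact hM.eigenvalues₀_antitone.comp
      ((Fin.cast_strictMono (Fintype.card_fin p).symm).monotone.comp_antitone Fin.rev_anti)
  -- Two increasing rearrangements of the same tuple coincide.
  have := congrFun (Tuple.unique_monotone (Tuple.monotone_sort hM.eigenvalues) hmono) k.rev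
  rw [hτ] at this
  simpa [eigLarge] using this

theorem eigLarge_antitone (hM : M.IsHermitian) : Antitone (eigLarge hM) := by
  intro i j hij
  simp only [hM.eigLarge_eq_eigenvalues₀]
  exact hM.eigenvalues₀_antitone hij

theorem le_eigLarge_of_forall_mem (hM : M.IsHermitian)
    {S : Submodule ℂ (EuclideanSpace ℂ (Fin p))} {J : Fin p} (hS : (J : ℕ) < finrank ℂ S)
    {r : ℝ} (hr : ∀ x ∈ S, r * ‖x‖ ^ 2 ≤ re ⟪toEuclideanLin M x, x⟫_ℂ) :
    r ≤ eigLarge hM J := by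
  rw [hM.eigLarge_eq_eigenvalues₀]
  exact (isSymmetric_toEuclideanLin_iff.mpr hM).le_eigenvalues_of_forall_mem
    finrank_euclideanSpace (i := Fin.cast _ J) hS hr

end Matrix.IsHermitian

section Compression

variable {n m : ℕ} {V : Matrix (Fin n) (Fin m) ℂ}

theorem inner_toEuclideanLin_of_conjTranspose_mul_self (hV : Vᴴ * V = 1)
    (x y : EuclideanSpace ℂ (Fin m)) :
    ⟪toEuclideanLin V x, toEuclideanLin V y⟫_ℂ = ⟪x, y⟫_ℂ := by
  rw [← LinearMap.adjoint_inner_right, ← toEuclideanLin_conjTranspose_eq_adjoint]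
  simp [toLpLin_apply, mulVec_mulVec, hV]

theorem inner_toEuclideanLin_conjTranspose_mul_mul (A : Matrix (Fin n) (Fin n) ℂ)
    (x y : EuclideanSpace ℂ (Fin m)) :
    ⟪toEuclideanLin (Vᴴ * A * V) x, y⟫_ℂ
      = ⟪toEuclideanLin A (toEuclideanLin V x), toEuclideanLin V y⟫_ℂ := by
  rw [← LinearMap.adjoint_inner_left, ← toEuclideanLin_conjTranspose_eq_adjoint]
  simp [toLpLin_apply, mulVec_mulVec]

theorem eigLarge_conjTranspose_mul_mul_le {A : Matrix (Fin n) (Fin n) ℂ} (hA : A.IsHermitian)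
    (hV : Vᴴ * V = 1) (hC : (Vᴴ * A * V).IsHermitian) (J : ℕ) (hJm : J < m) (hJn : J < n) :
    eigLarge hC ⟨J, hJm⟩ ≤ eigLarge hA ⟨J, hJn⟩ := by
  have hTC := isSymmetric_toEuclideanLin_iff.mpr hC
  set k : Fin (J + 1) → Fin (Fintype.card (Fin m)) :=
    fun i => Fin.cast (Fintype.card_fin m).symm (Fin.castLE hJm i)
  set t := hTC.eigenvectorBasis finrank_euclideanSpace ∘ k
  have ht : Orthonormal ℂ t := (hTC.eigenvectorBasis _).orthonormal.comp k
    ((Fin.cast_injective _).comp (Fin.castLE_injective _))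
  set W := toEuclideanLin V
  have hW : Orthonormal ℂ (W ∘ t) := by
    rw [orthonormal_iff_ite] at ht ⊢
    intro i j
    simp only [Function.comp_apply, W, inner_toEuclideanLin_of_conjTranspose_mul_self hV]
    exact ht i j
  refine hA.le_eigLarge_of_forall_mem (S := span ℂ (Set.range (W ∘ t))) ?_ ?_
  · simp [finrank_span_eq_card hW.linearIndependent]
  intro y hy
  rw [Set.range_comp, ← Submodule.map_span] at hy
  obtain ⟨z, hz, rfl⟩ := hy
  rw [← inner_toEuclideanLin_conjTranspose_mul_mul, norm_sq_eq_re_inner (𝕜 := ℂ),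
    inner_toEuclideanLin_of_conjTranspose_mul_self hV, ← norm_sq_eq_re_inner (𝕜 := ℂ)]
  refine ht.mul_norm_sq_le_re_inner_map (fun i => hTC.apply_eigenvectorBasis _ (k i)) ?_ hz
  intro i
  rw [hC.eigLarge_eq_eigenvalues₀]
  exact hTC.eigenvalues_antitone _ (Nat.lt_succ_iff.mp i.2)

end Compression

/-- interpolatory property: if the column span of `V` contains orthonormal
eigenvectors for the `J+1` largest eigenvalues of `A`, then `λ_J(Vᴴ A V) = λ_J(A)`
(0-indexed `J`). -/
theorem stmt3 (n m J : ℕ) (hJm : J < m) (hJn : J < n)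
    (A : Matrix (Fin n) (Fin n) ℂ) (hA : A.IsHermitian)
    (s : Fin n → (Fin n → ℂ))
    (hortho : ∀ i j, star (s i) ⬝ᵥ s j = if i = j then 1 else 0)
    (heig : ∀ i, A *ᵥ s i = (eigLarge hA i : ℂ) • s i)
    (V : Matrix (Fin n) (Fin m) ℂ) (hV : Vᴴ * V = 1)
    (hspan : ∀ i : Fin n, (i : ℕ) ≤ J → ∃ c : Fin m → ℂ, s i = V *ᵥ c)
    (hC : (Vᴴ * A * V).IsHermitian) :
    eigLarge hC ⟨J, hJm⟩ = eigLarge hA ⟨J, hJn⟩ := by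
  refine le_antisymm (eigLarge_conjTranspose_mul_mul_le hA hV hC J hJm hJn) ?_
  set e : Fin (J + 1) → Fin n := Fin.castLE hJn
  have hVVs (k : Fin (J + 1)) : V *ᵥ (Vᴴ *ᵥ s (e k)) = s (e k) := by
    obtain ⟨c, hc⟩ := hspan (e k) (Nat.lt_succ_iff.mp k.2)
    simp [hc, mulVec_mulVec, hV]
  set w : Fin (J + 1) → EuclideanSpace ℂ (Fin m) := fun k => WithLp.toLp 2 (Vᴴ *ᵥ s (e k))
  have hw : Orthonormal ℂ w := by
    rw [orthonormal_iff_ite]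
    intro i j
    rw [EuclideanSpace.inner_eq_star_dotProduct, dotProduct_comm, star_mulVec,
      conjTranspose_conjTranspose, ← dotProduct_mulVec, hVVs, hortho]
    simp [e, Fin.castLE_inj]
  have hCw (k : Fin (J + 1)) :
      toEuclideanLin (Vᴴ * A * V) (w k) = (eigLarge hA (e k) : ℂ) • w k := by
    simp only [w, toLpLin_apply, ← mulVec_mulVec, hVVs, heig, mulVec_smul, WithLp.toLp_smul]
  refine hC.le_eigLarge_of_forall_mem (S := span ℂ (Set.range w)) ?_ fun x hx =>
    hw.mul_norm_sq_le_re_inner_map hCw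
      (fun k => hA.eigLarge_antitone (show e k ≤ ⟨J, hJn⟩ from Nat.lt_succ_iff.mp k.2)) hx
  simp [finrank_span_eq_card hw.linearIndependent]
end

section
/- Let A be an n×n Hermitian matrix, S the J-dimensional span of eigenvectors corresponding to its J largest eigenvalues, and Ŝ a J-dimensional subspace with d(Ŝ, S) = ε, where d(Ŝ,S) = max over unit v̂ ∈ Ŝ of the distance from v̂ to S. Let V be an n×m matrix with orthonormal columns whose column span contains Ŝ. Then λ_J(A) − λ_J(V* A V) ≤ C ε² for a constant C depending only on ‖A‖₂ (and not on ε), for ε sufficiently small; in particular the eigenvalue gap is O(ε²), not merely O(ε). -/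
/-!
By a dimension count, the coordinate space of `Ŝ` meets the span of the eigenvectors of
`Vᴴ A V` for its `m - J` smallest eigenvalues; a unit vector `c` there has
`⟨c, Vᴴ A V c⟩ ≤ λ_J(Vᴴ A V)`, and `v = V c` is a unit vector of `Ŝ`. Split `v = p + δ` with
`p ∈ S` and `δ ⊥ S`, so that `‖δ‖ ≤ ε`. Since `A` maps `S` into `S`, the first-order cross terms
of `⟨v, A v⟩` vanish, which is why the error is quadratic:
`⟨v, A v⟩ = ⟨p, A p⟩ + ⟨δ, A δ⟩ ≥ λ_J(A) (1 - ‖δ‖²) - ‖A‖ ‖δ‖² ≥ λ_J(A) - 2 ‖A‖ ε²`.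
-/

open Matrix

open Module

section DotProduct

variable {ι κ : Type*} [Fintype ι] [Fintype κ]

theorem star_dotProduct_self_eq_norm_sq (x : ι → ℂ) :
    star x ⬝ᵥ x = ((‖WithLp.toLp 2 x‖ ^ 2 : ℝ) : ℂ) := by
  rw [dotProduct_comm, ← EuclideanSpace.inner_toLp_toLp, inner_self_eq_norm_sq_to_K]
  push_cast; rfl

theorem re_star_dotProduct_self_nonneg (x : ι → ℂ) : 0 ≤ (star x ⬝ᵥ x).re := by
  rw [star_dotProduct_self_eq_norm_sq, Complex.ofReal_re]
  positivity

theorem Submodule.exists_star_dotProduct_self_eq_one {p : Submodule ℂ (ι → ℂ)} {x : ι → ℂ}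
    (hx : x ∈ p) (hx0 : x ≠ 0) : ∃ y ∈ p, star y ⬝ᵥ y = 1 := by
  have hx0' : WithLp.toLp 2 x ≠ 0 := by simpa using hx0
  refine ⟨(‖WithLp.toLp 2 x‖⁻¹ : ℂ) • x, p.smul_mem _ hx, ?_⟩
  rw [star_dotProduct_self_eq_norm_sq, WithLp.toLp_smul]
  simp [norm_smul, hx0']

theorem re_star_dotProduct_self_add {x y : ι → ℂ} (h : star y ⬝ᵥ x = 0) :
    (star (x + y) ⬝ᵥ (x + y)).re = (star x ⬝ᵥ x).re + (star y ⬝ᵥ y).re := by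
  have h' : star x ⬝ᵥ y = 0 := by rw [star_dotProduct, h, star_zero]
  simp only [star_add, add_dotProduct, dotProduct_add, h, h', Complex.add_re, Complex.zero_re]
  ring

theorem Matrix.IsHermitian.re_star_dotProduct_mulVec_add {A : Matrix ι ι ℂ} (hA : A.IsHermitian)
    {x y : ι → ℂ} (h : star (A *ᵥ y) ⬝ᵥ x = 0) :
    (star (x + y) ⬝ᵥ (A *ᵥ (x + y))).re =
      (star x ⬝ᵥ (A *ᵥ x)).re + (star y ⬝ᵥ (A *ᵥ y)).re := by
  have hyx : star y ⬝ᵥ (A *ᵥ x) = 0 := by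
    rw [dotProduct_mulVec, ← hA.eq, ← star_mulVec, h]
  have hxy : star x ⬝ᵥ (A *ᵥ y) = 0 := by rw [star_dotProduct, h, star_zero]
  simp only [star_add, mulVec_add, add_dotProduct, dotProduct_add, hxy, hyx, Complex.add_re,
    Complex.zero_re]
  ring

theorem star_mulVec_dotProduct_mulVec [DecidableEq κ] {V : Matrix ι κ ℂ} (hV : Vᴴ * V = 1)
    (x y : κ → ℂ) :
    star (V *ᵥ x) ⬝ᵥ (V *ᵥ y) = star x ⬝ᵥ y := by
  rw [star_mulVec, dotProduct_mulVec, vecMul_vecMul, hV, vecMul_one]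

theorem star_dotProduct_conjTranspose_mul_mul_mulVec (V : Matrix ι κ ℂ) (A : Matrix ι ι ℂ)
    (x : κ → ℂ) : star x ⬝ᵥ ((Vᴴ * A * V) *ᵥ x) = star (V *ᵥ x) ⬝ᵥ (A *ᵥ (V *ᵥ x)) := by
  rw [← mulVec_mulVec, ← mulVec_mulVec, dotProduct_mulVec, star_mulVec]

theorem abs_re_star_dotProduct_mulVec_le [DecidableEq ι] (A : Matrix ι ι ℂ) (x : ι → ℂ) :
    |(star x ⬝ᵥ (A *ᵥ x)).re| ≤ ‖toEuclideanCLM (𝕜 := ℂ) A‖ * (star x ⬝ᵥ x).re := by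
  set x' := WithLp.toLp 2 x
  have hx : star x ⬝ᵥ (A *ᵥ x) = inner ℂ x' (toEuclideanCLM (𝕜 := ℂ) A x') := by
    rw [toEuclideanCLM_toLp, EuclideanSpace.inner_toLp_toLp, dotProduct_comm]
  rw [hx, star_dotProduct_self_eq_norm_sq, Complex.ofReal_re]
  calc |(inner ℂ x' (toEuclideanCLM (𝕜 := ℂ) A x')).re|
      ≤ ‖x'‖ * ‖toEuclideanCLM (𝕜 := ℂ) A x'‖ :=
        (Complex.abs_re_le_norm _).trans (norm_inner_le_norm _ _)
    _ ≤ ‖x'‖ * (‖toEuclideanCLM (𝕜 := ℂ) A‖ * ‖x'‖) := by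
        gcongr; exact (toEuclideanCLM (𝕜 := ℂ) A).le_opNorm x'
    _ = ‖toEuclideanCLM (𝕜 := ℂ) A‖ * ‖x'‖ ^ 2 := by ring

end DotProduct

section OrthonormalFamily

variable {ι κ : Type*} [Fintype ι] {u : κ → ι → ℂ}

theorem star_dotProduct_eq_zero_of_mem_span {t : Set κ} {x y : ι → ℂ}
    (hx : ∀ i ∈ t, star (u i) ⬝ᵥ x = 0) (hy : y ∈ Submodule.span ℂ (u '' t)) :
    star y ⬝ᵥ x = 0 := by
  induction hy using Submodule.span_induction with
  | mem y h => obtain ⟨i, hi, rfl⟩ := h; exact hx i hi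
  | zero => simp
  | add y z _ _ hy hz => rw [star_add, add_dotProduct, hy, hz, add_zero]
  | smul a y _ hy => rw [star_smul, smul_dotProduct, hy, smul_zero]

theorem mulVec_mem_span_of_mulVec_eq_smul {M : Matrix ι ι ℂ} {μ : κ → ℝ}
    (heig : ∀ i, M *ᵥ u i = (μ i : ℂ) • u i) {t : Set κ} {y : ι → ℂ}
    (hy : y ∈ Submodule.span ℂ (u '' t)) : M *ᵥ y ∈ Submodule.span ℂ (u '' t) := by
  refine (Submodule.span_le.mpr ?_ : _ ≤ (Submodule.span ℂ (u '' t)).comap M.mulVecLin) hy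
  rintro _ ⟨i, hi, rfl⟩
  rw [SetLike.mem_coe, Submodule.mem_comap, mulVecLin_apply, heig]
  exact Submodule.smul_mem _ _ (Submodule.subset_span ⟨i, hi, rfl⟩)

theorem linearIndependent_of_star_dotProduct_eq_ite [Fintype κ] [DecidableEq κ]
    (hu : ∀ i j, star (u i) ⬝ᵥ u j = if i = j then 1 else 0) : LinearIndependent ℂ u := by
  rw [Fintype.linearIndependent_iff]
  intro g hg j
  simpa [dotProduct_sum, hu] using congr_arg (star (u j) ⬝ᵥ ·) hg

theorem finrank_span_image_of_star_dotProduct_eq_ite [Fintype κ] [DecidableEq κ]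
    (hu : ∀ i j, star (u i) ⬝ᵥ u j = if i = j then 1 else 0) (s : Finset κ) :
    finrank ℂ (Submodule.span ℂ (u '' s)) = s.card := by
  have h := finrank_span_eq_card ((linearIndependent_of_star_dotProduct_eq_ite hu).comp _
    (Subtype.val_injective (p := (· ∈ s))))
  rw [Set.image_eq_range]
  simpa [Function.comp_def] using h

theorem eq_sum_smul_of_mem_span [Fintype κ] [DecidableEq κ]
    (hu : ∀ i j, star (u i) ⬝ᵥ u j = if i = j then 1 else 0)
    {x : ι → ℂ} (hx : x ∈ Submodule.span ℂ (Set.range u)) :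
    x = ∑ i, (star (u i) ⬝ᵥ x) • u i := by
  induction hx using Submodule.span_induction with
  | mem y h => obtain ⟨j, rfl⟩ := h; simp [hu]
  | zero => simp
  | add y z _ _ hy hz =>
    conv_lhs => rw [hy, hz]
    simp only [dotProduct_add, add_smul, Finset.sum_add_distrib]
  | smul a y _ hy =>
    conv_lhs => rw [hy]
    simp only [dotProduct_smul, smul_assoc, Finset.smul_sum]

theorem re_star_dotProduct_mulVec_eq_sum [Fintype κ] [DecidableEq κ]
    (hu : ∀ i j, star (u i) ⬝ᵥ u j = if i = j then 1 else 0) {M : Matrix ι ι ℂ} {μ : κ → ℝ}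
    (heig : ∀ i, M *ᵥ u i = (μ i : ℂ) • u i) {x : ι → ℂ}
    (hx : x ∈ Submodule.span ℂ (Set.range u)) :
    (star x ⬝ᵥ (M *ᵥ x)).re = ∑ i, μ i * ‖star (u i) ⬝ᵥ x‖ ^ 2 := by
  have hMx : M *ᵥ x = ∑ i, (star (u i) ⬝ᵥ x) • (μ i : ℂ) • u i := by
    conv_lhs => rw [eq_sum_smul_of_mem_span hu hx]
    simp only [mulVec_sum, mulVec_smul, heig]
  simp only [hMx, dotProduct_sum, dotProduct_smul, Complex.re_sum]
  refine Finset.sum_congr rfl fun i _ => ?_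
  rw [star_dotProduct x (u i), smul_eq_mul, smul_eq_mul, mul_left_comm, Complex.star_def,
    Complex.mul_conj', ← Complex.ofReal_pow, ← Complex.ofReal_mul, Complex.ofReal_re]

theorem exists_mem_span_star_dotProduct_sub_eq_zero [Fintype κ] [DecidableEq κ]
    (hu : ∀ i j, star (u i) ⬝ᵥ u j = if i = j then 1 else 0) (t : Set κ) (x : ι → ℂ) :
    ∃ w ∈ Submodule.span ℂ (u '' t), ∀ i ∈ t, star (u i) ⬝ᵥ (x - w) = 0 := by
  classical
  refine ⟨∑ j ∈ Finset.univ.filter (· ∈ t), (star (u j) ⬝ᵥ x) • u j,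
    Submodule.sum_mem _ fun j hj => Submodule.smul_mem _ _
      (Submodule.subset_span ⟨j, (Finset.mem_filter.mp hj).2, rfl⟩), fun i hi => ?_⟩
  simp [dotProduct_sub, dotProduct_sum, dotProduct_smul, hu, hi]

end OrthonormalFamily

section Rayleigh

variable {ι κ : Type*} [Fintype ι] [DecidableEq ι] [Fintype κ] [DecidableEq κ]
  {u : κ → ι → ℂ} {M : Matrix ι ι ℂ} {μ : κ → ℝ} {t : Set κ} {α : ℝ} {x : ι → ℂ}

theorem mul_re_star_dotProduct_self_le_of_mem_span
    (hu : ∀ i j, star (u i) ⬝ᵥ u j = if i = j then 1 else 0)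
    (heig : ∀ i, M *ᵥ u i = (μ i : ℂ) • u i) (hα : ∀ i ∈ t, α ≤ μ i)
    (hx : x ∈ Submodule.span ℂ (u '' t)) :
    α * (star x ⬝ᵥ x).re ≤ (star x ⬝ᵥ (M *ᵥ x)).re := by
  have hx' : x ∈ Submodule.span ℂ (Set.range u) :=
    Submodule.span_mono (Set.image_subset_range _ _) hx
  have hnorm := re_star_dotProduct_mulVec_eq_sum hu (M := 1) (μ := 1) (by simp) hx'
  rw [one_mulVec] at hnorm
  rw [hnorm, re_star_dotProduct_mulVec_eq_sum hu heig hx', Finset.mul_sum]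
  refine Finset.sum_le_sum fun i _ => ?_
  by_cases hi : i ∈ t
  · simpa using mul_le_mul_of_nonneg_right (hα i hi) (sq_nonneg ‖star (u i) ⬝ᵥ x‖)
  · have hxi : star x ⬝ᵥ u i = 0 := star_dotProduct_eq_zero_of_mem_span
      (fun j hj => by simp [hu, ne_of_mem_of_not_mem hj hi]) hx
    simp [star_dotProduct (u i), hxi]

theorem re_star_dotProduct_mulVec_le_mul_of_mem_span
    (hu : ∀ i j, star (u i) ⬝ᵥ u j = if i = j then 1 else 0)
    (heig : ∀ i, M *ᵥ u i = (μ i : ℂ) • u i) (hα : ∀ i ∈ t, μ i ≤ α)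
    (hx : x ∈ Submodule.span ℂ (u '' t)) :
    (star x ⬝ᵥ (M *ᵥ x)).re ≤ α * (star x ⬝ᵥ x).re := by
  have h := mul_re_star_dotProduct_self_le_of_mem_span hu (M := -M) (μ := -μ)
    (fun i => by simp [neg_mulVec, heig]) (α := -α) (fun i hi => neg_le_neg (hα i hi)) hx
  simp only [neg_mulVec, dotProduct_neg, Complex.neg_re, neg_mul] at h
  linarith

end Rayleigh

theorem Submodule.exists_ne_zero_mem_inf_of_finrank_lt_add {K V : Type*} [DivisionRing K]
    [AddCommGroup V] [Module K V] [FiniteDimensional K V] {s t : Submodule K V}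
    (h : finrank K V < finrank K s + finrank K t) : ∃ x ∈ s ⊓ t, x ≠ 0 := by
  by_contra! h'
  exact h.not_ge (Submodule.finrank_add_finrank_le_of_disjoint
    (Submodule.disjoint_def.mpr fun x hs ht => h' x ⟨hs, ht⟩))

theorem Submodule.finrank_le_finrank_comap_of_le_range {K V W : Type*} [DivisionRing K]
    [AddCommGroup V] [Module K V] [FiniteDimensional K V] [AddCommGroup W] [Module K W]
    {f : V →ₗ[K] W} {p : Submodule K W} (h : p ≤ LinearMap.range f) :
    finrank K p ≤ finrank K (p.comap f) :=
  calc finrank K p = finrank K ((p.comap f).map f) := by rw [Submodule.map_comap_eq_of_le h]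
    _ ≤ finrank K (p.comap f) := Submodule.finrank_map_le _ _

theorem Matrix.IsHermitian.star_eigenvectorBasis_dotProduct {𝕜 n : Type*} [RCLike 𝕜]
    [Fintype n] [DecidableEq n] {A : Matrix n n 𝕜} (hA : A.IsHermitian) (i j : n) :
    star ⇑(hA.eigenvectorBasis i) ⬝ᵥ ⇑(hA.eigenvectorBasis j) = if i = j then 1 else 0 := by
  rw [dotProduct_comm, ← EuclideanSpace.inner_eq_star_dotProduct]
  exact orthonormal_iff_ite.mp hA.eigenvectorBasis.orthonormal i j

theorem eigLarge_antitone {n : ℕ} {A : Matrix (Fin n) (Fin n) ℂ} (hA : A.IsHermitian) :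
    Antitone (eigLarge hA) :=
  (Tuple.monotone_sort hA.eigenvalues).comp_antitone Fin.rev_anti

theorem Matrix.IsHermitian.le_re_star_dotProduct_mulVec_add_of_near_span {ι κ : Type*}
    [Fintype ι] [DecidableEq ι] [Fintype κ] [DecidableEq κ] {A : Matrix ι ι ℂ}
    (hA : A.IsHermitian) {u : κ → ι → ℂ}
    (hu : ∀ i j, star (u i) ⬝ᵥ u j = if i = j then 1 else 0) {μ : κ → ℝ}
    (heig : ∀ i, A *ᵥ u i = (μ i : ℂ) • u i) {t : Set κ} {α ε : ℝ} (hα : ∀ i ∈ t, α ≤ μ i)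
    (hαA : α ≤ ‖toEuclideanCLM (𝕜 := ℂ) A‖) {x w : ι → ℂ} (hx : star x ⬝ᵥ x = 1)
    (hw : w ∈ Submodule.span ℂ (u '' t)) (hxw : (star (x - w) ⬝ᵥ (x - w)).re ≤ ε ^ 2) :
    α ≤ (star x ⬝ᵥ (A *ᵥ x)).re + 2 * ‖toEuclideanCLM (𝕜 := ℂ) A‖ * ε ^ 2 := by
  set S := Submodule.span ℂ (u '' t)
  obtain ⟨p, hpS, hperp⟩ := exists_mem_span_star_dotProduct_sub_eq_zero hu t x
  set δ := x - p
  have hδS : ∀ y ∈ S, star y ⬝ᵥ δ = 0 := fun y hy => star_dotProduct_eq_zero_of_mem_span hperp hy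
  have hxδ : x = δ + p := (sub_add_cancel x p).symm
  have hδε : (star δ ⬝ᵥ δ).re ≤ ε ^ 2 := by
    have h := re_star_dotProduct_self_add (hδS _ (S.sub_mem hpS hw))
    rw [sub_add_sub_cancel] at h
    linarith [re_star_dotProduct_self_nonneg (p - w)]
  have hp : (star p ⬝ᵥ p).re = 1 - (star δ ⬝ᵥ δ).re := by
    have h := re_star_dotProduct_self_add (hδS p hpS)
    rw [← hxδ, hx, Complex.one_re] at h
    linarith
  have hsplit :
      (star x ⬝ᵥ (A *ᵥ x)).re = (star δ ⬝ᵥ (A *ᵥ δ)).re + (star p ⬝ᵥ (A *ᵥ p)).re := by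
    rw [hxδ]
    exact hA.re_star_dotProduct_mulVec_add (hδS _ (mulVec_mem_span_of_mulVec_eq_smul heig hpS))
  have hpA := mul_re_star_dotProduct_self_le_of_mem_span hu heig hα hpS
  rw [hp] at hpA
  have hδA := (abs_le.mp (abs_re_star_dotProduct_mulVec_le A δ)).1
  nlinarith [mul_nonneg (sub_nonneg.mpr hαA) (re_star_dotProduct_self_nonneg δ),
    mul_le_mul_of_nonneg_left hδε (norm_nonneg (toEuclideanCLM (𝕜 := ℂ) A))]

theorem Matrix.IsHermitian.exists_mem_re_star_dotProduct_mulVec_le_eigLarge {m : ℕ}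
    {M : Matrix (Fin m) (Fin m) ℂ} (hM : M.IsHermitian) {J : ℕ} (hJ : J < m)
    {T : Submodule ℂ (Fin m → ℂ)} (hT : J + 1 ≤ finrank ℂ T) :
    ∃ c ∈ T, star c ⬝ᵥ c = 1 ∧ (star c ⬝ᵥ (M *ᵥ c)).re ≤ eigLarge hM ⟨J, hJ⟩ := by
  set σ := Tuple.sort hM.eigenvalues
  set u : Fin m → Fin m → ℂ := fun i => hM.eigenvectorBasis (σ i)
  have hu : ∀ i j, star (u i) ⬝ᵥ u j = if i = j then 1 else 0 := fun i j => by
    simp only [u, hM.star_eigenvectorBasis_dotProduct, σ.injective.eq_iff]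
  have heig : ∀ i, M *ᵥ u i = (hM.eigenvalues (σ i) : ℂ) • u i := fun i => by
    rw [hM.mulVec_eigenvectorBasis, Complex.coe_smul]
  set K : Fin m := (⟨J, hJ⟩ : Fin m).rev
  set W := Submodule.span ℂ (u '' ↑(Finset.Iic K))
  have hW : finrank ℂ W = m - J := by
    rw [finrank_span_image_of_star_dotProduct_eq_ite hu, Fin.card_Iic]
    simp only [K, Fin.val_rev]
    omega
  obtain ⟨c, hc, hc0⟩ := Submodule.exists_ne_zero_mem_inf_of_finrank_lt_add (s := T) (t := W)
    (by rw [hW, Module.finrank_fin_fun]; omega)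
  obtain ⟨c₀, ⟨hc₀T, hc₀W⟩, hc₀⟩ := Submodule.exists_star_dotProduct_self_eq_one hc hc0
  refine ⟨c₀, hc₀T, hc₀, ?_⟩
  have h := re_star_dotProduct_mulVec_le_mul_of_mem_span hu heig
    (fun i hi => Tuple.monotone_sort hM.eigenvalues (Finset.mem_Iic.mp hi)) hc₀W
  rwa [hc₀, Complex.one_re, mul_one] at h

/-- accuracy of reduced problems: if the column span of `V` contains a
`(J+1)`-dimensional subspace `Ŝ` whose (Euclidean) distance to the span `S` of the
eigenvectors for the `J+1` largest eigenvalues of `A` is at most `ε`, then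
`λ_J(A) − λ_J(Vᴴ A V) ≤ C ε²` with a constant `C` depending only on `‖A‖₂`
(0-indexed `J`, `ε` small). Distances and norms are expressed via `⬝ᵥ`. -/
theorem stmt7 :
    ∃ C : ℝ → ℝ, ∀ (n m J : ℕ) (hJm : J < m) (hJn : J < n)
      (A : Matrix (Fin n) (Fin n) ℂ) (hA : A.IsHermitian)
      (s : Fin n → (Fin n → ℂ)),
      (∀ i j, star (s i) ⬝ᵥ s j = if i = j then 1 else 0) →
      (∀ i, A *ᵥ s i = (eigLarge hA i : ℂ) • s i) →
      ∀ Shat : Submodule ℂ (Fin n → ℂ), Module.finrank ℂ Shat = J + 1 →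
      ∀ ε : ℝ, 0 ≤ ε → ε ≤ 1 →
      (∀ v ∈ Shat, star v ⬝ᵥ v = 1 →
        ∃ w ∈ Submodule.span ℂ (s '' {i : Fin n | (i : ℕ) ≤ J}),
          (star (v - w) ⬝ᵥ (v - w)).re ≤ ε ^ 2) →
      ∀ V : Matrix (Fin n) (Fin m) ℂ, Vᴴ * V = 1 →
      (∀ v ∈ Shat, ∃ c : Fin m → ℂ, v = V *ᵥ c) →
      ∀ hC : (Vᴴ * A * V).IsHermitian,
        eigLarge hA ⟨J, hJn⟩ - eigLarge hC ⟨J, hJm⟩ ≤ C (specNorm A) * ε ^ 2 := by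
  refine ⟨fun a => 2 * a, ?_⟩
  intro n m J hJm hJn A hA s hs heig Shat hShat ε _ _ hdist V hV hVS hC
  have hT : J + 1 ≤ finrank ℂ (Shat.comap V.mulVecLin) :=
    hShat ▸ Submodule.finrank_le_finrank_comap_of_le_range fun v hv =>
      (hVS v hv).imp fun c hc => hc.symm
  obtain ⟨c, hcS, hc, hcM⟩ := hC.exists_mem_re_star_dotProduct_mulVec_le_eigLarge hJm hT
  have hv : star (V *ᵥ c) ⬝ᵥ (V *ᵥ c) = 1 := by rw [star_mulVec_dotProduct_mulVec hV, hc]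
  obtain ⟨w, hw, hvw⟩ := hdist (V *ᵥ c) hcS hv
  have heig_le_norm : eigLarge hA ⟨J, hJn⟩ ≤ ‖toEuclideanCLM (𝕜 := ℂ) A‖ := by
    simpa [heig, hs] using (abs_le.mp (abs_re_star_dotProduct_mulVec_le A (s ⟨J, hJn⟩))).2
  have hAv := hA.le_re_star_dotProduct_mulVec_add_of_near_span hs heig
    (fun i hi => eigLarge_antitone hA (Fin.mk_le_of_le_val hi)) heig_le_norm hv hw hvw
  rw [star_dotProduct_conjTranspose_mul_mul_mulVec] at hcM
  change _ ≤ 2 * ‖toEuclideanCLM (𝕜 := ℂ) A‖ * ε ^ 2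
  linarith
end

section
/- Let λ_J : Ω → ℝ be continuous on a compact set Ω ⊆ ℝ^d, and for each k let λ_J^{(k)} : Ω → ℝ be functions satisfying: (a) λ_J^{(k)}(ω) ≤ λ_J^{(p)}(ω) ≤ λ_J(ω) for all ω ∈ Ω and all k ≤ p (monotonicity), (b) λ_J^{(k)}(ω^{(k)}) = λ_J(ω^{(k)}) where ω^{(k+1)} is a global minimizer of λ_J^{(k)} over Ω (interpolation), and (c) all λ_J^{(k)} are Lipschitz with a common constant γ. Then for every convergent subsequence ω^{(ℓ_k)} → ω̄ of the sequence of iterates, ω̄ is a global minimizer of λ_J over Ω. -/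
open Matrix

/-!
Between two iterates `ω k` and `ω m` with `k < m`, monotonicity and the minimizing property of
`ω m` give `g k (ω m) ≤ min_Ω f`, while interpolation and the uniform Lipschitz bound give
`f (ω k) ≤ g k (ω m) + γ * dist (ω k) (ω m)`. Along a convergent subsequence consecutive terms get close,
so by continuity of `f` the limit attains `min_Ω f`.
-/

open Filter Topology

section GreedyMinimization

variable {X : Type*} {Ω : Set X} {f : X → ℝ} {g : ℕ → X → ℝ}
  {ω : ℕ → X} {k m : ℕ} {x : X}

theorem greedy_surrogate_le_of_lt
    (hmono : ∀ k p, k ≤ p → ∀ ω ∈ Ω, g k ω ≤ g p ω) (hub : ∀ k, ∀ ω ∈ Ω, g k ω ≤ f ω)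
    (hωΩ : ∀ k, ω k ∈ Ω) (hargmin : ∀ k, ∀ x ∈ Ω, g k (ω (k + 1)) ≤ g k x)
    (hkm : k < m) (hx : x ∈ Ω) : g k (ω m) ≤ f x := by
  obtain ⟨n, rfl⟩ : ∃ n, m = n + 1 := Nat.exists_eq_add_one_of_ne_zero (by omega)
  calc g k (ω (n + 1)) ≤ g n (ω (n + 1)) := hmono k n (by omega) _ (hωΩ _)
    _ ≤ g n x := hargmin n x hx
    _ ≤ f x := hub n x hx

theorem greedy_value_le_add_dist [PseudoMetricSpace X] {γ : NNReal} (hLip : ∀ k, LipschitzOnWith γ (g k) Ω)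
    (hmono : ∀ k p, k ≤ p → ∀ ω ∈ Ω, g k ω ≤ g p ω) (hub : ∀ k, ∀ ω ∈ Ω, g k ω ≤ f ω)
    (hωΩ : ∀ k, ω k ∈ Ω) (hinterp : ∀ k, g k (ω k) = f (ω k))
    (hargmin : ∀ k, ∀ x ∈ Ω, g k (ω (k + 1)) ≤ g k x)
    (hkm : k < m) (hx : x ∈ Ω) : f (ω k) ≤ f x + γ * dist (ω k) (ω m) := by
  calc f (ω k) = g k (ω k) := (hinterp k).symm
    _ ≤ g k (ω m) + γ * dist (ω k) (ω m) := (hLip k).le_add_mul (hωΩ k) (hωΩ m)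
    _ ≤ f x + γ * dist (ω k) (ω m) := by
      gcongr
      exact greedy_surrogate_le_of_lt hmono hub hωΩ hargmin hkm hx

end GreedyMinimization

/-- global convergence of the greedy subspace minimization procedure:
every convergent subsequence of the iterates converges to a global minimizer. -/
theorem stmt9 (d : ℕ) (Ω : Set (EuclideanSpace ℝ (Fin d))) (hΩc : IsCompact Ω)
    (f : EuclideanSpace ℝ (Fin d) → ℝ) (hf : ContinuousOn f Ω)
    (g : ℕ → EuclideanSpace ℝ (Fin d) → ℝ)
    (γ : NNReal) (hLip : ∀ k, LipschitzOnWith γ (g k) Ω)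
    (hmono : ∀ k p, k ≤ p → ∀ ω ∈ Ω, g k ω ≤ g p ω)
    (hub : ∀ k, ∀ ω ∈ Ω, g k ω ≤ f ω)
    (ω : ℕ → EuclideanSpace ℝ (Fin d)) (hωΩ : ∀ k, ω k ∈ Ω)
    (hinterp : ∀ k, g k (ω k) = f (ω k))
    (hargmin : ∀ k, ∀ x ∈ Ω, g k (ω (k + 1)) ≤ g k x)
    (φ : ℕ → ℕ) (hφ : StrictMono φ)
    (ωbar : EuclideanSpace ℝ (Fin d))
    (hconv : Filter.Tendsto (fun k => ω (φ k)) Filter.atTop (nhds ωbar)) :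
    ωbar ∈ Ω ∧ ∀ x ∈ Ω, f ωbar ≤ f x := by
  have hmem : ωbar ∈ Ω := hΩc.isClosed.mem_of_tendsto hconv (.of_forall fun k => hωΩ (φ k))
  refine ⟨hmem, fun x hx => ?_⟩
  have hf_lim : Tendsto (fun k => f (ω (φ k))) atTop (𝓝 (f ωbar)) :=
    (hf ωbar hmem).tendsto.comp
      (tendsto_nhdsWithin_iff.2 ⟨hconv, .of_forall fun k => hωΩ (φ k)⟩)
  have hdist_lim : Tendsto (fun k => dist (ω (φ k)) (ω (φ (k + 1)))) atTop (𝓝 0) := by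
    simpa using hconv.dist (hconv.comp (tendsto_add_atTop_nat 1))
  have hbound_lim :
      Tendsto (fun k => f x + γ * dist (ω (φ k)) (ω (φ (k + 1)))) atTop (𝓝 (f x)) := by
    simpa using tendsto_const_nhds.add (hdist_lim.const_mul (γ : ℝ))
  exact le_of_tendsto_of_tendsto' hf_lim hbound_lim fun k =>
    greedy_value_le_add_dist hLip hmono hub hωΩ hinterp hargmin (hφ k.lt_succ_self) hx
end

section
/- Under the same setting as the greedy subspace minimization procedure (monotone lower envelopes λ_J^{(k)} ≤ λ_J interpolating λ_J at the iterates ω^{(k)}, with iterates ω^{(k+1)} ∈ argmin_Ω λ_J^{(k)}, all functions uniformly Lipschitz on a compact Ω), the sequence of reduced minimal values λ_J^{(k)}(ω^{(k+1)}) is monotonically increasing, bounded above by min_{ω∈Ω} λ_J(ω), and converges to min_{ω∈Ω} λ_J(ω). -/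
open Matrix

/-! The reduced minima `g k (ω (k+1))` increase because the envelopes do and `ω (k+1)` minimizes
`g k`; they stay below `inf f` because `g k ≤ f`. For the limit, pick a convergent subsequence of
the iterates: for `l ≤ k`, interpolation and the uniform Lipschitz bound give
`f (ω l) = g k (ω l) ≤ g k (ω (k+1)) + γ · dist (ω l) (ω (k+1))`, and along consecutive terms
of the subsequence the distance tends to `0`, so `inf f` is below every upper bound of the
reduced minima. -/

open Filter Topology

section GreedyMinimization

variable {X : Type*} {Ω : Set X} {f : X → ℝ} {g : ℕ → X → ℝ} {ω : ℕ → X}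

theorem monotone_greedy_min (hmono : ∀ k, ∀ x ∈ Ω, g k x ≤ g (k + 1) x) (hωΩ : ∀ k, ω k ∈ Ω)
    (hargmin : ∀ k, ∀ x ∈ Ω, g k (ω (k + 1)) ≤ g k x) :
    Monotone (fun k => g k (ω (k + 1))) :=
  monotone_nat_of_le_succ fun k =>
    (hargmin k _ (hωΩ _)).trans (hmono k _ (hωΩ _))

theorem greedy_min_le (hub : ∀ k, ∀ x ∈ Ω, g k x ≤ f x)
    (hargmin : ∀ k, ∀ x ∈ Ω, g k (ω (k + 1)) ≤ g k x) (k : ℕ) {x : X} (hx : x ∈ Ω) :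
    g k (ω (k + 1)) ≤ f x :=
  (hargmin k x hx).trans (hub k x hx)

theorem greedy_min_le_sInf_image (hub : ∀ k, ∀ x ∈ Ω, g k x ≤ f x) (hωΩ : ∀ k, ω k ∈ Ω)
    (hargmin : ∀ k, ∀ x ∈ Ω, g k (ω (k + 1)) ≤ g k x) (k : ℕ) :
    g k (ω (k + 1)) ≤ sInf (f '' Ω) :=
  le_csInf ⟨f (ω 0), ω 0, hωΩ 0, rfl⟩ <| by
    rintro _ ⟨x, hx, rfl⟩
    exact greedy_min_le hub hargmin k hx

theorem le_greedy_min_add_dist [PseudoMetricSpace X] {γ : NNReal} {k l : ℕ}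
    (hLip : LipschitzOnWith γ (g k) Ω) (hl : ω l ∈ Ω) (hk : ω (k + 1) ∈ Ω)
    (hinterp : g k (ω l) = f (ω l)) :
    f (ω l) ≤ g k (ω (k + 1)) + γ * dist (ω l) (ω (k + 1)) :=
  hinterp ▸ hLip.le_add_mul hl hk

theorem sInf_image_le_of_greedy_min_le [PseudoMetricSpace X] (hΩc : IsCompact Ω) {γ : NNReal}
    (hLip : ∀ k, LipschitzOnWith γ (g k) Ω) (hub : ∀ k, ∀ x ∈ Ω, g k x ≤ f x)
    (hωΩ : ∀ k, ω k ∈ Ω) (hinterp : ∀ k l, l ≤ k → g k (ω l) = f (ω l))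
    (hargmin : ∀ k, ∀ x ∈ Ω, g k (ω (k + 1)) ≤ g k x) {b : ℝ}
    (hb : ∀ k, g k (ω (k + 1)) ≤ b) :
    sInf (f '' Ω) ≤ b := by
  obtain ⟨w, -, φ, hφ, hconv⟩ := hΩc.tendsto_subseq (fun k => hωΩ (k + 1))
  have hbdd : BddBelow (f '' Ω) := ⟨g 0 (ω 1), by
    rintro _ ⟨x, hx, rfl⟩
    exact greedy_min_le hub hargmin 0 hx⟩
  -- `l = φ n + 1 ≤ k = φ (n + 1)`, and both `ω l` and `ω (k + 1)` tend to `w`.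
  have hdist : Tendsto (fun n => b + γ * dist (ω (φ n + 1)) (ω (φ (n + 1) + 1))) atTop
      (𝓝 (b + γ * dist w w)) :=
    tendsto_const_nhds.add <| tendsto_const_nhds.mul <|
      hconv.dist (hconv.comp (tendsto_add_atTop_nat 1))
  rw [dist_self, mul_zero, add_zero] at hdist
  refine ge_of_tendsto' hdist fun n => ?_
  calc sInf (f '' Ω) ≤ f (ω (φ n + 1)) := csInf_le hbdd ⟨_, hωΩ _, rfl⟩
    _ ≤ g (φ (n + 1)) (ω (φ (n + 1) + 1)) + γ * dist (ω (φ n + 1)) (ω (φ (n + 1) + 1)) :=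
      le_greedy_min_add_dist (hLip _) (hωΩ _) (hωΩ _) (hinterp _ _ (hφ n.lt_succ_self))
    _ ≤ b + γ * dist (ω (φ n + 1)) (ω (φ (n + 1) + 1)) := by gcongr; exact hb _

end GreedyMinimization

theorem stmt10_general (d : ℕ) (Ω : Set (EuclideanSpace ℝ (Fin d))) (hΩc : IsCompact Ω)
    (f : EuclideanSpace ℝ (Fin d) → ℝ)
    (g : ℕ → EuclideanSpace ℝ (Fin d) → ℝ)
    (γ : NNReal) (hLip : ∀ k, LipschitzOnWith γ (g k) Ω)
    (hmono : ∀ k p, k ≤ p → ∀ ω ∈ Ω, g k ω ≤ g p ω)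
    (hub : ∀ k, ∀ ω ∈ Ω, g k ω ≤ f ω)
    (ω : ℕ → EuclideanSpace ℝ (Fin d)) (hωΩ : ∀ k, ω k ∈ Ω)
    (hinterp : ∀ k l, l ≤ k → g k (ω l) = f (ω l))
    (hargmin : ∀ k, ∀ x ∈ Ω, g k (ω (k + 1)) ≤ g k x) :
    Monotone (fun k => g k (ω (k + 1))) ∧
    (∀ k, g k (ω (k + 1)) ≤ sInf (f '' Ω)) ∧
    Filter.Tendsto (fun k => g k (ω (k + 1))) Filter.atTop (nhds (sInf (f '' Ω))) := by
  have hmin_mono := monotone_greedy_min (fun k => hmono k (k + 1) k.le_succ) hωΩ hargmin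
  have hmin_le := greedy_min_le_sInf_image hub hωΩ hargmin
  refine ⟨hmin_mono, hmin_le, tendsto_atTop_isLUB hmin_mono ⟨?_, ?_⟩⟩
  · rintro _ ⟨k, rfl⟩
    exact hmin_le k
  · intro b hb
    exact sInf_image_le_of_greedy_min_le hΩc hLip hub hωΩ hinterp hargmin
      fun k => hb ⟨k, rfl⟩

/-- in the greedy subspace minimization procedure, the reduced minimal
values `g k (ω (k+1))` form a monotonically increasing sequence bounded above by the
global minimum of `f` over `Ω`, and converge to that global minimum. -/
theorem stmt10 (d : ℕ) (Ω : Set (EuclideanSpace ℝ (Fin d))) (hΩc : IsCompact Ω)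
    (f : EuclideanSpace ℝ (Fin d) → ℝ) (hf : ContinuousOn f Ω)
    (g : ℕ → EuclideanSpace ℝ (Fin d) → ℝ)
    (γ : NNReal) (hLip : ∀ k, LipschitzOnWith γ (g k) Ω)
    (hmono : ∀ k p, k ≤ p → ∀ ω ∈ Ω, g k ω ≤ g p ω)
    (hub : ∀ k, ∀ ω ∈ Ω, g k ω ≤ f ω)
    (ω : ℕ → EuclideanSpace ℝ (Fin d)) (hωΩ : ∀ k, ω k ∈ Ω)
    (hinterp : ∀ k l, l ≤ k → g k (ω l) = f (ω l))
    (hargmin : ∀ k, ∀ x ∈ Ω, g k (ω (k + 1)) ≤ g k x) :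
    Monotone (fun k => g k (ω (k + 1))) ∧
    (∀ k, g k (ω (k + 1)) ≤ sInf (f '' Ω)) ∧
    Filter.Tendsto (fun k => g k (ω (k + 1))) Filter.atTop (nhds (sInf (f '' Ω))) :=
  stmt10_general d Ω hΩc f g γ hLip hmono hub ω hωΩ hinterp hargmin
end

section
/- Let B be a p×q complex matrix with singular value decomposition data: σ₁ ≥ ... ≥ σ_J its J largest singular values with consistent left singular vectors u₁,...,u_J and right singular vectors v₁,...,v_J (B v_j = σ_j u_j and B* u_j = σ_j v_j). Let U be a p×m matrix and V a q×m matrix, each with orthonormal columns, whose column spans contain u₁,...,u_J and v₁,...,v_J respectively. Then σ_J(U* B V) = σ_J(B). -/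
/-!
The squared singular values of `B` are the eigenvalues of the Gram matrix `BᴴB`, and by the
Courant–Fischer principle `σ_J(B)² = max_W min_{x ∈ W} ‖Bx‖² / ‖x‖²` over subspaces `W` of
dimension `J + 1`. Compressing can only lose: `x ↦ Vx` is an isometry and `Uᴴ` a contraction, so
`‖(UᴴBV)y‖ ≤ ‖B(Vy)‖` and `σ_J(UᴴBV) ≤ σ_J(B)`. Conversely, since `u_j ∈ range U` and
`v_j ∈ range V`, the vectors `Vᴴ v_j` (`j ≤ J`) are orthonormal eigenvectors of
`(UᴴBV)ᴴ(UᴴBV)` with eigenvalues `σ_j² ≥ σ_J²`, which gives the reverse inequality.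
-/

open Matrix

open scoped InnerProductSpace ComplexOrder
open Module Submodule

section Rayleigh

variable {𝕜 E ι : Type*} [RCLike 𝕜] [NormedAddCommGroup E] [InnerProductSpace 𝕜 E] [Fintype ι]
  {T : E →ₗ[𝕜] E} {w : ι → E} {μ : ι → ℝ}

theorem Orthonormal.re_inner_sum_map_sum (hw : Orthonormal 𝕜 w)
    (hT : ∀ i, T (w i) = (μ i : 𝕜) • w i) (a : ι → 𝕜) :
    RCLike.re ⟪∑ i, a i • w i, T (∑ i, a i • w i)⟫_𝕜 = ∑ i, μ i * ‖a i‖ ^ 2 := by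
  have hTsum : T (∑ i, a i • w i) = ∑ i, (μ i * a i : 𝕜) • w i := by
    simp only [map_sum, map_smul, hT, smul_smul, mul_comm]
  rw [hTsum, hw.inner_sum, map_sum]
  refine Finset.sum_congr rfl fun i _ => ?_
  rw [mul_left_comm, RCLike.conj_mul, ← RCLike.ofReal_pow, ← RCLike.ofReal_mul, RCLike.ofReal_re]

theorem Orthonormal.norm_sum_sq (hw : Orthonormal 𝕜 w) (a : ι → 𝕜) :
    ‖∑ i, a i • w i‖ ^ 2 = ∑ i, ‖a i‖ ^ 2 := by
  rw [← inner_self_eq_norm_sq (𝕜 := 𝕜)]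
  simpa using hw.re_inner_sum_map_sum (T := LinearMap.id) (μ := 1) (by simp) a

theorem Orthonormal.le_re_inner_map_of_mem_span (hw : Orthonormal 𝕜 w)
    (hT : ∀ i, T (w i) = (μ i : 𝕜) • w i) {t : ℝ} (ht : ∀ i, t ≤ μ i) {x : E}
    (hx : x ∈ span 𝕜 (Set.range w)) : t * ‖x‖ ^ 2 ≤ RCLike.re ⟪x, T x⟫_𝕜 := by
  obtain ⟨a, rfl⟩ := (mem_span_range_iff_exists_fun 𝕜).mp hx
  rw [hw.re_inner_sum_map_sum hT, hw.norm_sum_sq, Finset.mul_sum]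
  gcongr with i
  exact ht i

theorem Orthonormal.re_inner_map_le_of_mem_span (hw : Orthonormal 𝕜 w)
    (hT : ∀ i, T (w i) = (μ i : 𝕜) • w i) {t : ℝ} (ht : ∀ i, μ i ≤ t) {x : E}
    (hx : x ∈ span 𝕜 (Set.range w)) : RCLike.re ⟪x, T x⟫_𝕜 ≤ t * ‖x‖ ^ 2 := by
  obtain ⟨a, rfl⟩ := (mem_span_range_iff_exists_fun 𝕜).mp hx
  rw [hw.re_inner_sum_map_sum hT, hw.norm_sum_sq, Finset.mul_sum]
  gcongr with i
  exact ht i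

end Rayleigh

theorem EuclideanSpace.orthonormal_toLp_iff {𝕜 ι n : Type*} [RCLike 𝕜] [Fintype n]
    [DecidableEq ι] {w : ι → n → 𝕜} :
    Orthonormal 𝕜 (fun i => WithLp.toLp 2 (w i)) ↔
      ∀ i j, star (w i) ⬝ᵥ w j = if i = j then 1 else 0 := by
  simp only [orthonormal_iff_ite, EuclideanSpace.inner_eq_star_dotProduct, dotProduct_comm]

namespace Matrix.IsHermitian

variable {n : ℕ} {A : Matrix (Fin n) (Fin n) ℂ} (hA : A.IsHermitian)

/-- Ordered by increasing eigenvalue, so that `eigLarge hA J` is the eigenvalue of the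
vector of index `J.rev`. -/
noncomputable def sortedEigenvectorBasis : OrthonormalBasis (Fin n) ℂ (EuclideanSpace ℂ (Fin n)) :=
  hA.eigenvectorBasis.reindex (Tuple.sort hA.eigenvalues).symm

theorem toEuclideanLin_sortedEigenvectorBasis (k : Fin n) :
    toEuclideanLin A (hA.sortedEigenvectorBasis k)
      = ((hA.eigenvalues ∘ Tuple.sort hA.eigenvalues) k : ℂ) • hA.sortedEigenvectorBasis k := by
  rw [sortedEigenvectorBasis, OrthonormalBasis.reindex_apply, Equiv.symm_symm, toLpLin_apply,
    hA.mulVec_eigenvectorBasis]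
  rfl

theorem eigLarge_antitone_s15 : Antitone (eigLarge hA) := fun _ _ h =>
  Tuple.monotone_sort hA.eigenvalues (Fin.rev_le_rev.mpr h)

theorem exists_finrank_eq_eigLarge_mul_le (J : Fin n) :
    ∃ W : Submodule ℂ (EuclideanSpace ℂ (Fin n)), finrank ℂ W = J + 1 ∧
      ∀ x ∈ W, eigLarge hA J * ‖x‖ ^ 2 ≤ RCLike.re ⟪x, toEuclideanLin A x⟫_ℂ := by
  let top : Finset.Ici J.rev → EuclideanSpace ℂ (Fin n) := fun k => hA.sortedEigenvectorBasis k
  have htop : Orthonormal ℂ top :=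
    hA.sortedEigenvectorBasis.orthonormal.comp _ Subtype.val_injective
  refine ⟨span ℂ (Set.range top), ?_, fun x hx => htop.le_re_inner_map_of_mem_span
    (fun k => hA.toEuclideanLin_sortedEigenvectorBasis k)
    (fun k => Tuple.monotone_sort hA.eigenvalues (Finset.mem_Ici.mp k.2)) hx⟩
  rw [finrank_span_eq_card htop.linearIndependent, Fintype.card_coe, Fin.card_Ici, Fin.val_rev]
  omega

theorem le_eigLarge_of_finrank_le {J : Fin n} {t : ℝ}
    (W : Submodule ℂ (EuclideanSpace ℂ (Fin n))) (hW : J + 1 ≤ finrank ℂ W)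
    (hWbound : ∀ x ∈ W, t * ‖x‖ ^ 2 ≤ RCLike.re ⟪x, toEuclideanLin A x⟫_ℂ) :
    t ≤ eigLarge hA J := by
  let bot : Finset.Iic J.rev → EuclideanSpace ℂ (Fin n) := fun k => hA.sortedEigenvectorBasis k
  have hbot : Orthonormal ℂ bot :=
    hA.sortedEigenvectorBasis.orthonormal.comp _ Subtype.val_injective
  have hmeet : ¬ Disjoint W (span ℂ (Set.range bot)) := by
    intro hdisj
    have := finrank_add_finrank_le_of_disjoint hdisj
    rw [finrank_span_eq_card hbot.linearIndependent, Fintype.card_coe, Fin.card_Iic,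
      Fin.val_rev, finrank_euclideanSpace_fin] at this
    omega
  obtain ⟨x, hxW, hxbot, hx0⟩ : ∃ x ∈ W, x ∈ span ℂ (Set.range bot) ∧ x ≠ 0 := by
    simpa [disjoint_def] using hmeet
  have hupper := hbot.re_inner_map_le_of_mem_span
    (fun k => hA.toEuclideanLin_sortedEigenvectorBasis k)
    (fun k => Tuple.monotone_sort hA.eigenvalues (Finset.mem_Iic.mp k.2)) hxbot
  have hpos : 0 < ‖x‖ ^ 2 := by positivity
  exact le_of_mul_le_mul_right ((hWbound x hxW).trans hupper) hpos

theorem le_eigLarge_iff (J : Fin n) (t : ℝ) :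
    t ≤ eigLarge hA J ↔ ∃ W : Submodule ℂ (EuclideanSpace ℂ (Fin n)), J + 1 ≤ finrank ℂ W ∧
      ∀ x ∈ W, t * ‖x‖ ^ 2 ≤ RCLike.re ⟪x, toEuclideanLin A x⟫_ℂ := by
  refine ⟨fun ht => ?_, fun ⟨W, hW, hWbound⟩ => hA.le_eigLarge_of_finrank_le W hW hWbound⟩
  obtain ⟨W, hW, hWbound⟩ := hA.exists_finrank_eq_eigLarge_mul_le J
  exact ⟨W, hW.ge, fun x hx => (mul_le_mul_of_nonneg_right ht (by positivity)).trans
    (hWbound x hx)⟩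

theorem le_eigLarge_of_orthonormal {J : ℕ} (hJ : J < n)
    {w : Fin (J + 1) → EuclideanSpace ℂ (Fin n)} {μ : Fin (J + 1) → ℝ}
    (hw : Orthonormal ℂ w) (hAw : ∀ i, toEuclideanLin A (w i) = (μ i : ℂ) • w i) {t : ℝ}
    (ht : ∀ i, t ≤ μ i) : t ≤ eigLarge hA ⟨J, hJ⟩ :=
  hA.le_eigLarge_of_finrank_le (span ℂ (Set.range w))
    (by rw [finrank_span_eq_card hw.linearIndependent, Fintype.card_fin])
    fun _ hx => hw.le_re_inner_map_of_mem_span hAw ht hx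

end Matrix.IsHermitian

namespace Matrix

variable {p q m : ℕ}

theorem re_inner_toEuclideanLin_conjTranspose_mul_self (B : Matrix (Fin p) (Fin q) ℂ)
    (x : EuclideanSpace ℂ (Fin q)) :
    RCLike.re ⟪x, toEuclideanLin (Bᴴ * B) x⟫_ℂ = ‖toEuclideanLin B x‖ ^ 2 := by
  rw [toLpLin_mul_same, LinearMap.comp_apply, toEuclideanLin_conjTranspose_eq_adjoint,
    LinearMap.adjoint_inner_right, inner_self_eq_norm_sq]

theorem le_eigLarge_conjTranspose_mul_self_iff (B : Matrix (Fin p) (Fin q) ℂ) (J : Fin q)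
    (t : ℝ) :
    t ≤ eigLarge (isHermitian_conjTranspose_mul_self B) J ↔
      ∃ W : Submodule ℂ (EuclideanSpace ℂ (Fin q)), J + 1 ≤ finrank ℂ W ∧
        ∀ x ∈ W, t * ‖x‖ ^ 2 ≤ ‖toEuclideanLin B x‖ ^ 2 := by
  simp only [(isHermitian_conjTranspose_mul_self B).le_eigLarge_iff,
    re_inner_toEuclideanLin_conjTranspose_mul_self]

section Isometry

variable {U : Matrix (Fin p) (Fin m) ℂ} (hU : Uᴴ * U = 1)
include hU

theorem norm_toEuclideanLin_of_conjTranspose_mul_self_eq_one (x : EuclideanSpace ℂ (Fin m)) :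
    ‖toEuclideanLin U x‖ = ‖x‖ := by
  have h := re_inner_toEuclideanLin_conjTranspose_mul_self U x
  rw [hU, toLpLin_one, LinearMap.id_apply, inner_self_eq_norm_sq] at h
  exact ((pow_left_inj₀ (norm_nonneg _) (norm_nonneg _) two_ne_zero).mp h).symm

theorem norm_toEuclideanLin_conjTranspose_le (z : EuclideanSpace ℂ (Fin p)) :
    ‖toEuclideanLin Uᴴ z‖ ≤ ‖z‖ := by
  set y := toEuclideanLin Uᴴ z
  have h : ‖y‖ ^ 2 ≤ ‖y‖ * ‖z‖ :=
    calc ‖y‖ ^ 2 = RCLike.re ⟪toEuclideanLin U y, z⟫_ℂ := by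
          rw [← LinearMap.adjoint_inner_right, ← toEuclideanLin_conjTranspose_eq_adjoint,
            inner_self_eq_norm_sq]
      _ ≤ ‖toEuclideanLin U y‖ * ‖z‖ := re_inner_le_norm _ _
      _ = ‖y‖ * ‖z‖ := by rw [norm_toEuclideanLin_of_conjTranspose_mul_self_eq_one hU]
  nlinarith [norm_nonneg y, norm_nonneg z]

theorem mulVec_conjTranspose_mulVec_of_mem_range {u : Fin p → ℂ} (hu : ∃ c, u = U *ᵥ c) :
    U *ᵥ (Uᴴ *ᵥ u) = u := by
  obtain ⟨c, rfl⟩ := hu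
  rw [mulVec_mulVec _ Uᴴ, hU, one_mulVec]

theorem dotProduct_conjTranspose_mulVec_of_mem_range {u u' : Fin p → ℂ}
    (hu' : ∃ c, u' = U *ᵥ c) : star (Uᴴ *ᵥ u) ⬝ᵥ (Uᴴ *ᵥ u') = star u ⬝ᵥ u' := by
  rw [star_mulVec, conjTranspose_conjTranspose, ← dotProduct_mulVec,
    mulVec_conjTranspose_mulVec_of_mem_range hU hu']

variable {V : Matrix (Fin q) (Fin m) ℂ} (hV : Vᴴ * V = 1)
include hV

theorem conjTranspose_mul_self_mulVec_of_singular_pair {B : Matrix (Fin p) (Fin q) ℂ}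
    {u : Fin p → ℂ} {v : Fin q → ℂ} {σ : ℂ} (hBv : B *ᵥ v = σ • u) (hBu : Bᴴ *ᵥ u = σ • v)
    (hu : ∃ c, u = U *ᵥ c) (hv : ∃ c, v = V *ᵥ c) :
    ((Uᴴ * B * V)ᴴ * (Uᴴ * B * V)) *ᵥ (Vᴴ *ᵥ v) = (σ * σ) • (Vᴴ *ᵥ v) := by
  simp only [conjTranspose_mul, conjTranspose_conjTranspose, ← mulVec_mulVec,
    mulVec_conjTranspose_mulVec_of_mem_range hV hv, hBv, mulVec_smul,
    mulVec_conjTranspose_mulVec_of_mem_range hU hu, hBu, smul_smul]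

end Isometry

theorem eigLarge_conjTranspose_mul_mul_le {U : Matrix (Fin p) (Fin m) ℂ}
    {V : Matrix (Fin q) (Fin m) ℂ} (hU : Uᴴ * U = 1) (hV : Vᴴ * V = 1)
    (B : Matrix (Fin p) (Fin q) ℂ) {J : ℕ} (hJm : J < m) (hJq : J < q) :
    eigLarge (isHermitian_conjTranspose_mul_self (Uᴴ * B * V)) ⟨J, hJm⟩
      ≤ eigLarge (isHermitian_conjTranspose_mul_self B) ⟨J, hJq⟩ := by
  obtain ⟨W, hW, hWbound⟩ :=
    (le_eigLarge_conjTranspose_mul_self_iff (Uᴴ * B * V) ⟨J, hJm⟩ _).mp le_rfl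
  have hVnorm := norm_toEuclideanLin_of_conjTranspose_mul_self_eq_one hV
  have hVinj : Function.Injective (toEuclideanLin V) :=
    (LinearIsometry.mk (toEuclideanLin V) hVnorm).injective
  refine (le_eigLarge_conjTranspose_mul_self_iff _ _ _).mpr ⟨W.map (toEuclideanLin V), ?_, ?_⟩
  · rwa [← (equivMapOfInjective _ hVinj W).finrank_eq]
  · rintro _ ⟨y, hyW, rfl⟩
    calc _ = _ * ‖y‖ ^ 2 := by rw [hVnorm]
      _ ≤ ‖toEuclideanLin (Uᴴ * B * V) y‖ ^ 2 := hWbound y hyW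
      _ = ‖toEuclideanLin Uᴴ (toEuclideanLin B (toEuclideanLin V y))‖ ^ 2 := by
          simp only [toLpLin_mul_same, LinearMap.comp_apply]
      _ ≤ _ := by gcongr; exact norm_toEuclideanLin_conjTranspose_le hU _

end Matrix

theorem sq_svalLarge {p q : ℕ} (B : Matrix (Fin p) (Fin q) ℂ) (J : Fin q) :
    svalLarge B J ^ 2 = eigLarge (isHermitian_conjTranspose_mul_self B) J :=
  Real.sq_sqrt ((posSemidef_conjTranspose_mul_self B).eigenvalues_nonneg _)

theorem stmt15_general (p q m J : ℕ) (hJm : J < m) (hJq : J < q)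
    (B : Matrix (Fin p) (Fin q) ℂ)
    (u : Fin q → (Fin p → ℂ)) (v : Fin q → (Fin q → ℂ))
    (horthov : ∀ i j : Fin q, (i : ℕ) ≤ J → (j : ℕ) ≤ J →
      star (v i) ⬝ᵥ v j = if i = j then 1 else 0)
    (hsv₁ : ∀ i : Fin q, (i : ℕ) ≤ J → B *ᵥ v i = (svalLarge B i : ℂ) • u i)
    (hsv₂ : ∀ i : Fin q, (i : ℕ) ≤ J → Bᴴ *ᵥ u i = (svalLarge B i : ℂ) • v i)
    (U : Matrix (Fin p) (Fin m) ℂ) (V : Matrix (Fin q) (Fin m) ℂ)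
    (hU : Uᴴ * U = 1) (hV : Vᴴ * V = 1)
    (hspanU : ∀ i : Fin q, (i : ℕ) ≤ J → ∃ c : Fin m → ℂ, u i = U *ᵥ c)
    (hspanV : ∀ i : Fin q, (i : ℕ) ≤ J → ∃ c : Fin m → ℂ, v i = V *ᵥ c) :
    svalLarge (Uᴴ * B * V) ⟨J, hJm⟩ = svalLarge B ⟨J, hJq⟩ := by
  let idx : Fin (J + 1) → Fin q := Fin.castLE hJq
  have hidx (i : Fin (J + 1)) : (idx i : ℕ) ≤ J := Fin.is_le i
  refine congrArg Real.sqrt (le_antisymm (eigLarge_conjTranspose_mul_mul_le hU hV B hJm hJq) ?_)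
  refine (isHermitian_conjTranspose_mul_self _).le_eigLarge_of_orthonormal hJm
    (w := fun i => WithLp.toLp 2 (Vᴴ *ᵥ v (idx i))) (μ := fun i => svalLarge B (idx i) ^ 2)
    ?_ (fun i => ?_) (fun i => ?_)
  · refine EuclideanSpace.orthonormal_toLp_iff.mpr fun i j => ?_
    rw [dotProduct_conjTranspose_mulVec_of_mem_range hV (hspanV _ (hidx j)),
      horthov _ _ (hidx i) (hidx j)]
    simp only [idx, (Fin.castLE_injective hJq).eq_iff]
  · rw [toLpLin_toLp, toLin'_apply, conjTranspose_mul_self_mulVec_of_singular_pair hU hV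
      (hsv₁ _ (hidx i)) (hsv₂ _ (hidx i)) (hspanU _ (hidx i)) (hspanV _ (hidx i)), WithLp.toLp_smul]
    push_cast
    rw [sq]
  · rw [sq_svalLarge]
    exact (isHermitian_conjTranspose_mul_self B).eigLarge_antitone_s15 (hidx i)

/-- singular value interpolation: if the column spans of `U` and `V`
contain consistent orthonormal left/right singular vectors for the `J+1` largest
singular values of `B` (0-indexed `J`), then `σ_J(Uᴴ B V) = σ_J(B)`. -/
theorem stmt15 (p q m J : ℕ) (hJm : J < m) (hJq : J < q)
    (B : Matrix (Fin p) (Fin q) ℂ)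
    (u : Fin q → (Fin p → ℂ)) (v : Fin q → (Fin q → ℂ))
    (horthou : ∀ i j : Fin q, (i : ℕ) ≤ J → (j : ℕ) ≤ J →
      star (u i) ⬝ᵥ u j = if i = j then 1 else 0)
    (horthov : ∀ i j : Fin q, (i : ℕ) ≤ J → (j : ℕ) ≤ J →
      star (v i) ⬝ᵥ v j = if i = j then 1 else 0)
    (hsv₁ : ∀ i : Fin q, (i : ℕ) ≤ J → B *ᵥ v i = (svalLarge B i : ℂ) • u i)
    (hsv₂ : ∀ i : Fin q, (i : ℕ) ≤ J → Bᴴ *ᵥ u i = (svalLarge B i : ℂ) • v i)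
    (U : Matrix (Fin p) (Fin m) ℂ) (V : Matrix (Fin q) (Fin m) ℂ)
    (hU : Uᴴ * U = 1) (hV : Vᴴ * V = 1)
    (hspanU : ∀ i : Fin q, (i : ℕ) ≤ J → ∃ c : Fin m → ℂ, u i = U *ᵥ c)
    (hspanV : ∀ i : Fin q, (i : ℕ) ≤ J → ∃ c : Fin m → ℂ, v i = V *ᵥ c) :
    svalLarge (Uᴴ * B * V) ⟨J, hJm⟩ = svalLarge B ⟨J, hJq⟩ :=
  stmt15_general p q m J hJm hJq B u v horthov hsv₁ hsv₂ U V hU hV hspanU hspanV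
end
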